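/- arXiv:2604.09432 — 3 statements merged into one kernel-verified Lean document; each statement's English description precedes it below -/
import Mathlib

section
/- If U : ℝ → ℝ satisfies the first-order ODE U'(ξ) = (wα(γ₀ U(ξ) + Σ_{j=1}^m (γ_j/(j+1)) U(ξ)^{j+1}) + k c₁) / (w²α(γ₀ + Σ_{j=1}^m γ_j U(ξ)^j)² − k²(β₀ + Σ_{i=1}^n β_i U(ξ)^i)), and V is defined by V(ξ) = (wα/k)(γ₀ U(ξ) + Σ_{j=1}^m (γ_j/(j+1)) U(ξ)^{j+1}) + c₁ with k ≠ 0, then the pair (U, V) satisfies the travelling-wave system: −wα(γ₀ + Σ γ_j U^j) U' + k V' = 0 and −w(γ₀ + Σ γ_j U^j) V' + V + k(β₀ + Σ β_i U^i) U' = 0. -/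
open Finset

theorem stmt0 (m n : ℕ) (w k α c₁ : ℝ) (γ β : ℕ → ℝ)
    (U V : ℝ → ℝ) (hk : k ≠ 0)
    (hUdiff : Differentiable ℝ U)
    (hden : ∀ ξ : ℝ,
      w^2 * α * (γ 0 + ∑ j ∈ Finset.Icc 1 m, γ j * U ξ ^ j)^2
        - k^2 * (β 0 + ∑ i ∈ Finset.Icc 1 n, β i * U ξ ^ i) ≠ 0)
    (hU' : ∀ ξ : ℝ, deriv U ξ =
      (w * α * (γ 0 * U ξ + ∑ j ∈ Finset.Icc 1 m, (γ j / (j + 1)) * U ξ ^ (j + 1)) + k * c₁) /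
      (w^2 * α * (γ 0 + ∑ j ∈ Finset.Icc 1 m, γ j * U ξ ^ j)^2
        - k^2 * (β 0 + ∑ i ∈ Finset.Icc 1 n, β i * U ξ ^ i)))
    (hV : ∀ ξ : ℝ, V ξ =
      (w * α / k) * (γ 0 * U ξ + ∑ j ∈ Finset.Icc 1 m, (γ j / (j + 1)) * U ξ ^ (j + 1)) + c₁) :
    ∀ ξ : ℝ,
      (- w * α * (γ 0 + ∑ j ∈ Finset.Icc 1 m, γ j * U ξ ^ j) * deriv U ξ + k * deriv V ξ = 0)
      ∧ (- w * (γ 0 + ∑ j ∈ Finset.Icc 1 m, γ j * U ξ ^ j) * deriv V ξ + V ξ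
          + k * (β 0 + ∑ i ∈ Finset.Icc 1 n, β i * U ξ ^ i) * deriv U ξ = 0) := by
  intro ξ
  -- derivative of the antiderivative expression
  have hg : HasDerivAt (fun ξ => γ 0 * U ξ + ∑ j ∈ Finset.Icc 1 m, (γ j / (j + 1)) * U ξ ^ (j + 1))
      ((γ 0 + ∑ j ∈ Finset.Icc 1 m, γ j * U ξ ^ j) * deriv U ξ) ξ := by
    have hU : HasDerivAt U (deriv U ξ) ξ := (hUdiff ξ).hasDerivAt
    have h1 : HasDerivAt (fun ξ => γ 0 * U ξ) (γ 0 * deriv U ξ) ξ := hU.const_mul _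
    have h2 : ∀ j ∈ Finset.Icc 1 m,
        HasDerivAt (fun ξ => (γ j / (j + 1)) * U ξ ^ (j + 1))
          (γ j * U ξ ^ j * deriv U ξ) ξ := by
      intro j _
      have := (hU.pow (j + 1)).const_mul (γ j / (j + 1 : ℝ))
      refine this.congr_deriv ?_
      have hj : ((j : ℝ) + 1) ≠ 0 := by positivity
      push_cast
      field_simp
    have hsum := HasDerivAt.fun_sum h2
    have := h1.add hsum
    refine this.congr_deriv ?_
    rw [add_mul, Finset.sum_mul]
  have hVfun : V = fun ξ => (w * α / k) * (γ 0 * U ξ +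
      ∑ j ∈ Finset.Icc 1 m, (γ j / (j + 1)) * U ξ ^ (j + 1)) + c₁ := funext hV
  have hV' : deriv V ξ = (w * α / k) * ((γ 0 + ∑ j ∈ Finset.Icc 1 m, γ j * U ξ ^ j) * deriv U ξ) := by
    rw [hVfun]
    exact (((hg.const_mul (w * α / k)).add_const c₁).deriv)
  set P := γ 0 + ∑ j ∈ Finset.Icc 1 m, γ j * U ξ ^ j with hP
  set Q := β 0 + ∑ i ∈ Finset.Icc 1 n, β i * U ξ ^ i with hQ
  set G := γ 0 * U ξ + ∑ j ∈ Finset.Icc 1 m, (γ j / (j + 1)) * U ξ ^ (j + 1) with hG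
  have hD := hden ξ
  have hU'ξ := hU' ξ
  constructor
  · rw [hV']
    field_simp
    ring
  · rw [hV', hV ξ, hU'ξ]
    field_simp
    ring
end

section
/- For k ≠ 0, β₁ ≠ 0, c₃ ≠ 0, the function U(ξ) = (−kβ₀ + √(k²β₀² − 2kβ₁(c₃ξ + c₄)))/(kβ₁) satisfies the ODE c₃ + k(β₀ + β₁U(ξ))U'(ξ) = 0 on the open set where k²β₀² − 2kβ₁(c₃ξ + c₄) > 0. -/
/-- Differentiating `(a U + b)² = D` gives `2 a (a U + b) U' = D'`. -/
theorem mul_deriv_eq_of_affine_eq_sqrt {U D : ℝ → ℝ} {a b D' x : ℝ} (ha : a ≠ 0)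
    (hU : ∀ y, a * U y + b = √(D y)) (hD : HasDerivAt D D' x) (hx : 0 < D x) :
    (a * U x + b) * deriv U x = D' / (2 * a) := by
  have hU_eq : U = fun y => (√(D y) - b) / a :=
    funext fun y => by rw [← hU y]; field_simp; ring
  have hU_deriv : HasDerivAt U (D' / (2 * √(D x)) / a) x := by
    rw [hU_eq]
    exact ((hD.sqrt hx.ne').sub_const b).div_const a
  have hsqrt : √(D x) ≠ 0 := (Real.sqrt_pos.mpr hx).ne'
  rw [hU_deriv.deriv, hU x]
  field_simp

theorem stmt2_general (k β₀ β₁ c₃ c₄ : ℝ) (hk : k ≠ 0) (hβ₁ : β₁ ≠ 0)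
    (U : ℝ → ℝ)
    (hU : ∀ ξ : ℝ, U ξ =
      (- k * β₀ + Real.sqrt (k^2 * β₀^2 - 2 * k * β₁ * (c₃ * ξ + c₄))) / (k * β₁)) :
    ∀ ξ : ℝ, k^2 * β₀^2 - 2 * k * β₁ * (c₃ * ξ + c₄) > 0 →
      c₃ + k * (β₀ + β₁ * U ξ) * deriv U ξ = 0 := by
  intro ξ hpos
  have hkβ₁ : k * β₁ ≠ 0 := mul_ne_zero hk hβ₁
  have hD : HasDerivAt (fun ξ => k^2 * β₀^2 - 2 * k * β₁ * (c₃ * ξ + c₄))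
      (-(2 * k * β₁ * c₃)) ξ := by
    simpa using ((((hasDerivAt_id ξ).const_mul c₃).add_const c₄).const_mul
      (2 * k * β₁)).const_sub (k^2 * β₀^2)
  have hU_affine : ∀ y, k * β₁ * U y + k * β₀ =
      √(k^2 * β₀^2 - 2 * k * β₁ * (c₃ * y + c₄)) := fun y => by
    rw [hU y]; field_simp; ring
  have key := mul_deriv_eq_of_affine_eq_sqrt hkβ₁ hU_affine hD hpos
  rw [show k * (β₀ + β₁ * U ξ) = k * β₁ * U ξ + k * β₀ by ring, key]
  field_simp
  ring

theorem stmt2 (k β₀ β₁ c₃ c₄ : ℝ) (hk : k ≠ 0) (hβ₁ : β₁ ≠ 0) (hc₃ : c₃ ≠ 0)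
    (U : ℝ → ℝ)
    (hU : ∀ ξ : ℝ, U ξ =
      (- k * β₀ + Real.sqrt (k^2 * β₀^2 - 2 * k * β₁ * (c₃ * ξ + c₄))) / (k * β₁)) :
    ∀ ξ : ℝ, k^2 * β₀^2 - 2 * k * β₁ * (c₃ * ξ + c₄) > 0 →
      c₃ + k * (β₀ + β₁ * U ξ) * deriv U ξ = 0 :=
  stmt2_general k β₀ β₁ c₃ c₄ hk hβ₁ U hU
end

section
/- With β₂ = w²αγ₁²/k², β₁ = 2w²αγ₀γ₁/k², c̃₁ = (γ₀/γ₁)² − 2kc₁/(wαγ₁) > 0, and A = wαγ₁√c̃₁ / (2(k²β₀ − w²αγ₀²)), the pair U(ξ) = √c̃₁ tanh(A(ξ+c₂)) − γ₀/γ₁, V(ξ) = (c₁ − wαγ₀²/(2kγ₁)) sech²(A(ξ+c₂)) satisfies both equations of the travelling-wave system: −wα(γ₀ + γ₁U)U' + kV' = 0 and −w(γ₀ + γ₁U)V' + V + k(β₀ + β₁U + β₂U²)U' = 0. -/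
open Real

lemma tanh_hasDerivAt (x : ℝ) : HasDerivAt Real.tanh (1 - Real.tanh x ^ 2) x := by
  have hc : Real.cosh x ≠ 0 := (Real.cosh_pos x).ne'
  have h : HasDerivAt (fun y => Real.sinh y / Real.cosh y)
      ((Real.cosh x * Real.cosh x - Real.sinh x * Real.sinh x) / Real.cosh x ^ 2) x :=
    (Real.hasDerivAt_sinh x).div (Real.hasDerivAt_cosh x) hc
  have heq : (fun y => Real.sinh y / Real.cosh y) = Real.tanh := by
    funext y; rw [Real.tanh_eq_sinh_div_cosh]
  rw [heq] at h
  convert h using 1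
  rw [Real.tanh_eq_sinh_div_cosh]
  have h2 : Real.cosh x ^ 2 - Real.sinh x ^ 2 = 1 := Real.cosh_sq_sub_sinh_sq x
  field_simp

lemma sech_sq (x : ℝ) : (1 / Real.cosh x) ^ 2 = 1 - Real.tanh x ^ 2 := by
  have hc : Real.cosh x ≠ 0 := (Real.cosh_pos x).ne'
  have h2 : Real.cosh x ^ 2 - Real.sinh x ^ 2 = 1 := Real.cosh_sq_sub_sinh_sq x
  rw [Real.tanh_eq_sinh_div_cosh]
  field_simp
  linarith [h2]

theorem stmt4 (w k α γ₀ γ₁ β₀ β₁ β₂ c₁ c₂ : ℝ)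
    (hk : k ≠ 0) (hw : w ≠ 0) (hα : α ≠ 0) (hγ₁ : γ₁ ≠ 0)
    (hne : k^2 * β₀ - w^2 * α * γ₀^2 ≠ 0)
    (hβ₂ : β₂ = w^2 * α * γ₁^2 / k^2)
    (hβ₁ : β₁ = 2 * w^2 * α * γ₀ * γ₁ / k^2)
    (c₁' : ℝ) (hc₁' : c₁' = (γ₀ / γ₁)^2 - 2 * k * c₁ / (w * α * γ₁)) (hcpos : c₁' > 0)
    (A : ℝ) (hA : A = w * α * γ₁ * Real.sqrt c₁' / (2 * (k^2 * β₀ - w^2 * α * γ₀^2)))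
    (U V : ℝ → ℝ)
    (hU : ∀ ξ : ℝ, U ξ = Real.sqrt c₁' * Real.tanh (A * (ξ + c₂)) - γ₀ / γ₁)
    (hV : ∀ ξ : ℝ, V ξ = (c₁ - w * α * γ₀^2 / (2 * k * γ₁)) * (1 / Real.cosh (A * (ξ + c₂)))^2) :
    ∀ ξ : ℝ,
      (- w * α * (γ₀ + γ₁ * U ξ) * deriv U ξ + k * deriv V ξ = 0)
      ∧ (- w * (γ₀ + γ₁ * U ξ) * deriv V ξ + V ξ
          + k * (β₀ + β₁ * U ξ + β₂ * U ξ ^ 2) * deriv U ξ = 0) := by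
  intro ξ
  obtain ⟨s, hs_def⟩ : ∃ s : ℝ, s = Real.sqrt c₁' := ⟨_, rfl⟩
  obtain ⟨q, hq_def⟩ : ∃ q : ℝ, q = γ₀ / γ₁ := ⟨_, rfl⟩
  obtain ⟨C, hC_def⟩ : ∃ C : ℝ, C = c₁ - w * α * γ₀^2 / (2 * k * γ₁) := ⟨_, rfl⟩
  have hUf : U = fun x => s * Real.tanh (A * (x + c₂)) - q := by
    funext x; rw [hU x, hq_def, hs_def]
  have hVf : V = fun x => C * (1 - Real.tanh (A * (x + c₂)) ^ 2) := by
    funext x; rw [hV x, sech_sq, hC_def]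
  subst hUf hVf
  obtain ⟨t, ht_def⟩ : ∃ t : ℝ, t = Real.tanh (A * (ξ + c₂)) := ⟨_, rfl⟩
  -- polynomial relations
  have hs2 : s ^ 2 = c₁' := by rw [hs_def]; exact Real.sq_sqrt hcpos.le
  rw [hc₁'] at hs2
  have hkey : w * α * γ₁^2 * s^2 = w * α * γ₀^2 - 2 * k * c₁ * γ₁ := by
    linear_combination (norm := (field_simp; ring1)) (w * α * γ₁^2) * hs2
  have hA2 : 2 * (k^2 * β₀ - w^2 * α * γ₀^2) * A = w * α * γ₁ * s := by
    rw [hA, ← hs_def]; field_simp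
  have hq' : γ₁ * q = γ₀ := by rw [hq_def]; field_simp
  have hC' : 2 * k * γ₁ * C = 2 * k * γ₁ * c₁ - w * α * γ₀^2 := by
    rw [hC_def]; field_simp
  have hb1 : k^2 * β₁ = 2 * w^2 * α * γ₀ * γ₁ := by rw [hβ₁]; field_simp
  have hb2 : k^2 * β₂ = w^2 * α * γ₁^2 := by rw [hβ₂]; field_simp
  -- derivatives
  have hin : HasDerivAt (fun x : ℝ => A * (x + c₂)) A ξ := by
    simpa using ((hasDerivAt_id ξ).add_const c₂).const_mul A
  have htanh : HasDerivAt (fun x : ℝ => Real.tanh (A * (x + c₂))) ((1 - t ^ 2) * A) ξ := by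
    rw [ht_def]
    exact (tanh_hasDerivAt (A * (ξ + c₂))).comp ξ hin
  have hdU : deriv (fun x => s * Real.tanh (A * (x + c₂)) - q) ξ = s * ((1 - t ^ 2) * A) :=
    ((htanh.const_mul s).sub_const q).deriv
  have hdV : deriv (fun x => C * (1 - Real.tanh (A * (x + c₂)) ^ 2)) ξ
      = C * (-(2 * t * ((1 - t ^ 2) * A))) := by
    have hp : HasDerivAt (fun x : ℝ => Real.tanh (A * (x + c₂)) ^ 2)
        (2 * t * ((1 - t ^ 2) * A)) ξ := by
      have := htanh.fun_pow 2
      simpa [ht_def, mul_comm, mul_assoc, mul_left_comm] using this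
    have h2 : HasDerivAt (fun x : ℝ => C * (1 - Real.tanh (A * (x + c₂)) ^ 2))
        (C * (-(2 * t * ((1 - t ^ 2) * A)))) ξ := by
      have := ((hasDerivAt_const ξ (1:ℝ)).fun_sub hp).const_mul C
      rw [show C * (-(2 * t * ((1 - t ^ 2) * A))) = C * (0 - 2 * t * ((1 - t ^ 2) * A)) by ring]
      exact this
    exact h2.deriv
  rw [hdU, hdV]
  simp only [← ht_def]
  constructor
  · apply mul_left_cancel₀ hγ₁
    linear_combination (w*α*γ₁*s*(1-t^2)*A) * hq' - (t*(1-t^2)*A) * hkey - (t*(1-t^2)*A) * hC'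
  · have h2k : (2 * k^2 * γ₁^2 : ℝ) ≠ 0 := by positivity
    apply mul_left_cancel₀ h2k
    linear_combination
      ((1-t^2) * (-4*k^2*γ₁^2*w*t*A*C + 2*k*w^2*α*γ₁^2*s*A*(γ₁*q - γ₀ - 2*γ₁*s*t))) * hq'
      + ((1-t^2) * 2*k*γ₁^2*s*A*(s*t - q)) * hb1
      + ((1-t^2) * 2*k*γ₁^2*s*A*(s*t - q)^2) * hb2
      + ((1-t^2) * k*γ₁^2*s) * hA2
      + ((1-t^2) * (2*k*γ₁^2*w*s*t^2*A + k*γ₁)) * hC'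
      + ((1-t^2) * (2*k*γ₁^2*w*s*t^2*A + k*γ₁)) * hkey
end
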